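/- arXiv:1705.11035 — 5 statements merged into one kernel-verified Lean document; each statement's English description precedes it below -/
import Mathlib

section
/- There exists a convex polygon with 9 vertices on which the Dobkin–Snyder triangle algorithm, started at any root, outputs a triangle whose area is strictly smaller than the maximum area of an inscribed triangle. Concretely, for P with vertices a0=(3040,4460), b2=(4745,4322), a1=(4752,4262), a2=(3383,413), c0=(5000,1000), c1=(1213,691), b0=(1000,1000), b1=(759,2927), c2=(2506,4423) (in convex position), the triangle △a0 b0 c0 has strictly larger area than each of the 2-stable triangles △a0 a1 a2, △b0 b1 b2, △c0 c1 c2. -/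
noncomputable section

/-- Twice the signed area of the triangle `p q r`. -/
def det2 (p q r : ℝ × ℝ) : ℝ :=
  (q.1 - p.1) * (r.2 - p.2) - (q.2 - p.2) * (r.1 - p.1)

/-- Area of the triangle with vertices `p`, `q`, `r`. -/
def triArea (p q r : ℝ × ℝ) : ℝ := |det2 p q r| / 2

/-- The vertices `v 0, v 1, ...` are in strictly convex position, listed in
counterclockwise cyclic order: every three consecutive vertices make a left turn. -/
def IsConvexCCW {m : ℕ} [NeZero m] (v : Fin m → ℝ × ℝ) : Prop :=
  ∀ i : Fin m, 0 < det2 (v i) (v (i + 1)) (v (i + 1 + 1))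

/-- `x` lies on the closed cyclic arc from `a` forward to `b`. -/
def btwFin {m : ℕ} (a x b : Fin m) : Prop := (x - a).val ≤ (b - a).val

/-- `x` lies strictly between `a` and `b` on the cyclic arc from `a` forward to `b`. -/
def sbtwFin {m : ℕ} (a x b : Fin m) : Prop := btwFin a x b ∧ x ≠ a ∧ x ≠ b

/-- The triangle `△ (v r) (v b) (v c)`, with `r, b, c` in counterclockwise cyclic
order, is 2-stable rooted at `r`: replacing `b` or `c` individually by any other
vertex of the polygon (respecting the cyclic order) does not strictly increase
the area. -/
def TwoStable {m : ℕ} (v : Fin m → ℝ × ℝ) (r b c : Fin m) : Prop :=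
  (∀ x : Fin m, btwFin r x c → triArea (v r) (v x) (v c) ≤ triArea (v r) (v b) (v c)) ∧
  (∀ x : Fin m, btwFin b x r → triArea (v r) (v b) (v x) ≤ triArea (v r) (v b) (v c))

/-- The triangle `△ (v p) (v q) (v r)`, with `p, q, r` in counterclockwise cyclic
order, is 3-stable: replacing any single one of its vertices by any other vertex
of the polygon (respecting the cyclic order) does not strictly increase the area. -/
def ThreeStable {m : ℕ} (v : Fin m → ℝ × ℝ) (p q r : Fin m) : Prop :=
  (∀ x : Fin m, btwFin r x q → triArea (v x) (v q) (v r) ≤ triArea (v p) (v q) (v r)) ∧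
  (∀ x : Fin m, btwFin p x r → triArea (v p) (v x) (v r) ≤ triArea (v p) (v q) (v r)) ∧
  (∀ x : Fin m, btwFin q x p → triArea (v p) (v q) (v x) ≤ triArea (v p) (v q) (v r))

/-- Two polygon-aligned triangles, given by index triples in cyclic order,
interleave: between every two cyclically successive vertices of one there is a
vertex of the other (possibly coinciding with one of them). -/
def InterleaveTri {m : ℕ} (i j k r s t : Fin m) : Prop :=
  (∃ x ∈ ({r, s, t} : Set (Fin m)), btwFin i x j) ∧
  (∃ x ∈ ({r, s, t} : Set (Fin m)), btwFin j x k) ∧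
  (∃ x ∈ ({r, s, t} : Set (Fin m)), btwFin k x i) ∧
  (∃ x ∈ ({i, j, k} : Set (Fin m)), btwFin r x s) ∧
  (∃ x ∈ ({i, j, k} : Set (Fin m)), btwFin s x t) ∧
  (∃ x ∈ ({i, j, k} : Set (Fin m)), btwFin t x r)

/-- The nine vertices of the counter-example polygon, in counterclockwise
convex-position order: b0, c1, a2, c0, a1, b2, a0, c2, b1. -/
def V9 : Fin 9 → ℝ × ℝ :=
  ![((1000 : ℝ), (1000 : ℝ)),  -- b0
    ((1213 : ℝ), (691 : ℝ)),   -- c1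
    ((3383 : ℝ), (413 : ℝ)),   -- a2
    ((5000 : ℝ), (1000 : ℝ)),  -- c0
    ((4752 : ℝ), (4262 : ℝ)),  -- a1
    ((4745 : ℝ), (4322 : ℝ)),  -- b2
    ((3040 : ℝ), (4460 : ℝ)),  -- a0
    ((2506 : ℝ), (4423 : ℝ)),  -- c2
    ((759 : ℝ), (2927 : ℝ))]   -- b1

/-! All vertices of the polygon have integer coordinates, so twice every area involved is the
absolute value of an integer determinant. Convexity, the two 2-stability conditions of each
triangle (ranging over the nine vertices) and the three area inequalities thereby become finitely
many comparisons of integers, which the kernel decides. -/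

def intDet2 (p q r : ℤ × ℤ) : ℤ :=
  (q.1 - p.1) * (r.2 - p.2) - (q.2 - p.2) * (r.1 - p.1)

def castPt (p : ℤ × ℤ) : ℝ × ℝ := ((p.1 : ℝ), (p.2 : ℝ))

instance {m : ℕ} (a x b : Fin m) : Decidable (btwFin a x b) :=
  inferInstanceAs (Decidable (_ ≤ _))

lemma det2_castPt (p q r : ℤ × ℤ) :
    det2 (castPt p) (castPt q) (castPt r) = intDet2 p q r := by
  simp only [det2, castPt, intDet2]
  push_cast
  ring

lemma triArea_castPt_le_iff (p q r p' q' r' : ℤ × ℤ) :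
    triArea (castPt p) (castPt q) (castPt r) ≤ triArea (castPt p') (castPt q') (castPt r') ↔
      |intDet2 p q r| ≤ |intDet2 p' q' r'| := by
  simp only [triArea, det2_castPt, div_le_div_iff_of_pos_right (two_pos : (0 : ℝ) < 2),
    ← Int.cast_abs, Int.cast_le]

lemma triArea_castPt_lt_iff (p q r p' q' r' : ℤ × ℤ) :
    triArea (castPt p) (castPt q) (castPt r) < triArea (castPt p') (castPt q') (castPt r') ↔
      |intDet2 p q r| < |intDet2 p' q' r'| := by
  simp only [triArea, det2_castPt, div_lt_div_iff_of_pos_right (two_pos : (0 : ℝ) < 2),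
    ← Int.cast_abs, Int.cast_lt]

lemma isConvexCCW_castPt_comp_iff {m : ℕ} [NeZero m] (w : Fin m → ℤ × ℤ) :
    IsConvexCCW (castPt ∘ w) ↔ ∀ i : Fin m, 0 < intDet2 (w i) (w (i + 1)) (w (i + 1 + 1)) := by
  simp only [IsConvexCCW, Function.comp_apply, det2_castPt, Int.cast_pos]

lemma twoStable_castPt_comp_iff {m : ℕ} (w : Fin m → ℤ × ℤ) (r b c : Fin m) :
    TwoStable (castPt ∘ w) r b c ↔
      (∀ x, btwFin r x c → |intDet2 (w r) (w x) (w c)| ≤ |intDet2 (w r) (w b) (w c)|) ∧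
      (∀ x, btwFin b x r → |intDet2 (w r) (w b) (w x)| ≤ |intDet2 (w r) (w b) (w c)|) := by
  simp only [TwoStable, Function.comp_apply, triArea_castPt_le_iff]

def W9 : Fin 9 → ℤ × ℤ :=
  ![(1000, 1000), (1213, 691), (3383, 413), (5000, 1000), (4752, 4262),
    (4745, 4322), (3040, 4460), (2506, 4423), (759, 2927)]

lemma V9_eq_castPt_comp_W9 : V9 = castPt ∘ W9 := by
  funext i
  fin_cases i <;> simp [V9, W9, castPt]

/-- The 9-vertex counter-example polygon to the Dobkin–Snyder triangle
algorithm: the polygon is convex (in counterclockwise order), each of the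
triangles `△a0 a1 a2`, `△b0 b1 b2` and `△c0 c1 c2` is 2-stable rooted at `a0`,
`b0`, `c0` respectively, and yet the triangle `△a0 b0 c0` has strictly larger
area than each of them. (Here `a0 = V9 6`, `b0 = V9 0`, `c0 = V9 3`,
`a1 = V9 4`, `a2 = V9 2`, `b1 = V9 8`, `b2 = V9 5`, `c1 = V9 1`, `c2 = V9 7`.) -/
theorem dobkin_snyder_counterexample :
    IsConvexCCW V9 ∧
    TwoStable V9 6 2 4 ∧ TwoStable V9 0 5 8 ∧ TwoStable V9 3 7 1 ∧
    triArea (V9 6) (V9 4) (V9 2) < triArea (V9 6) (V9 0) (V9 3) ∧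
    triArea (V9 0) (V9 8) (V9 5) < triArea (V9 6) (V9 0) (V9 3) ∧
    triArea (V9 3) (V9 1) (V9 7) < triArea (V9 6) (V9 0) (V9 3) := by
  rw [V9_eq_castPt_comp_W9]
  simp only [isConvexCCW_castPt_comp_iff, twoStable_castPt_comp_iff, Function.comp_apply,
    triArea_castPt_lt_iff]
  decide
end
end

section
/- Let P be a convex polygon, Λ a maximum-area P-aligned triangle, and T_a, T_m two P-aligned triangles each interleaving Λ, where T_a and T_m together subdivide the cyclic vertex sequence of P into six intervals. Then the three vertices of Λ lie in three pairwise disjoint intervals, one vertex per interval, with intervals compatible with interleaving both T_a and T_m. -/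
/-!
Measured from `u`, the cyclic order on an arc becomes the linear order of `Fin m`, so the forward
arc from one point of the open interval `(u, w)` to a later one stays inside `(u, w)`. Between two
distinct vertices of `Λ` that forward arc contains a whole side arc of `Λ`, which by interleaving
holds a vertex of `T_a`; that vertex would be a dividing vertex strictly inside `(u, w)`.
-/

noncomputable section

section CyclicArc

variable {m : ℕ}

theorem btwFin_iff_sub_le_sub {a x b : Fin m} : btwFin a x b ↔ x - a ≤ b - a :=
  Fin.le_def.symm

theorem btwFin_iff_of_le {a x b : Fin m} (hab : a ≤ b) :
    btwFin a x b ↔ a ≤ x ∧ x ≤ b := by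
  rw [btwFin, Fin.sub_val_of_le hab]
  rcases le_or_gt a x with hax | hxa
  · rw [Fin.sub_val_of_le hax, Fin.le_def, Fin.le_def]
    omega
  · rw [Fin.coe_sub_iff_lt.mpr hxa, Fin.le_def, Fin.le_def]
    have := b.isLt
    omega

theorem btwFin_iff_of_lt {a x b : Fin m} (hba : b < a) :
    btwFin a x b ↔ a ≤ x ∨ x ≤ b := by
  rw [btwFin, Fin.coe_sub_iff_lt.mpr hba]
  rcases le_or_gt a x with hax | hxa
  · rw [Fin.sub_val_of_le hax, Fin.le_def, Fin.le_def]
    have := x.isLt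
    omega
  · rw [Fin.coe_sub_iff_lt.mpr hxa, Fin.le_def, Fin.le_def]
    omega

theorem btwFin_trans_left {a d c b : Fin m} (h₁ : btwFin a d c) (h₂ : btwFin a c b) :
    btwFin a d b :=
  h₁.trans h₂

variable [NeZero m]

theorem btwFin_sub_right_iff {a x b : Fin m} (c : Fin m) :
    btwFin (a - c) (x - c) (b - c) ↔ btwFin a x b := by
  simp only [btwFin, sub_sub_sub_cancel_right]

theorem btwFin_rotate {a x b : Fin m} (h : btwFin a x b) (hxa : x ≠ a) : btwFin x b a := by
  rw [← btwFin_sub_right_iff a, sub_self,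
    btwFin_iff_of_lt ((Fin.pos_iff_ne_zero' _).mpr (sub_ne_zero.mpr hxa))]
  exact Or.inl (btwFin_iff_sub_le_sub.mp h)

theorem btwFin_trans_right {a c d b : Fin m} (h₁ : btwFin a c b) (h₂ : btwFin c d b) :
    btwFin a d b := by
  rw [← btwFin_sub_right_iff a, btwFin_iff_of_le (btwFin_iff_sub_le_sub.mp h₁)] at h₂
  exact btwFin_iff_sub_le_sub.mpr h₂.2

theorem sbtwFin_iff {u x w : Fin m} : sbtwFin u x w ↔ 0 < x - u ∧ x - u < w - u := by
  rw [sbtwFin, btwFin_iff_sub_le_sub, Fin.pos_iff_ne_zero', sub_ne_zero, lt_iff_le_and_ne,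
    ne_eq (x - u), sub_left_inj]
  tauto

theorem sbtwFin_of_btwFin {u w x y d : Fin m} (hx : sbtwFin u x w) (hy : sbtwFin u y w)
    (hxy : x - u ≤ y - u) (hd : btwFin x d y) : sbtwFin u d w := by
  rw [sbtwFin_iff] at hx hy ⊢
  rw [← btwFin_sub_right_iff u, btwFin_iff_of_le hxy] at hd
  exact ⟨hx.1.trans_le hd.1, hd.2.trans_lt hy.2⟩

theorem InterleaveTri.exists_btwFin {p q z r s t x y : Fin m} (h : InterleaveTri p q z r s t)
    (hpq : p ≠ q) (hqz : q ≠ z) (hcyc : btwFin p q z)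
    (hx : x ∈ ({p, q, z} : Set (Fin m))) (hy : y ∈ ({p, q, z} : Set (Fin m))) (hxy : x ≠ y) :
    ∃ d ∈ ({r, s, t} : Set (Fin m)), btwFin x d y := by
  obtain ⟨⟨d₁, hd₁, h₁⟩, ⟨d₂, hd₂, h₂⟩, ⟨d₃, hd₃, h₃⟩, -⟩ := h
  have hqzp := btwFin_rotate hcyc hpq.symm
  have hzpq := btwFin_rotate hqzp hqz.symm
  simp only [Set.mem_insert_iff, Set.mem_singleton_iff] at hx hy
  rcases hx with rfl | rfl | rfl <;> rcases hy with rfl | rfl | rfl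
  · exact absurd rfl hxy
  · exact ⟨d₁, hd₁, h₁⟩
  · exact ⟨d₁, hd₁, btwFin_trans_left h₁ hcyc⟩
  · exact ⟨d₃, hd₃, btwFin_trans_right hqzp h₃⟩
  · exact absurd rfl hxy
  · exact ⟨d₂, hd₂, h₂⟩
  · exact ⟨d₃, hd₃, h₃⟩
  · exact ⟨d₁, hd₁, btwFin_trans_right hzpq h₁⟩
  · exact absurd rfl hxy

end CyclicArc

theorem lambda_vertices_one_per_interval_general (n : ℕ)
    (p q z a1 a2 a3 m1 m2 m3 : Fin (n + 3))
    (hdΛ : p ≠ q ∧ q ≠ z ∧ p ≠ z) (hcycΛ : btwFin p q z)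
    (hIa : InterleaveTri p q z a1 a2 a3) :
    ∀ u w : Fin (n + 3),
      u ∈ ({a1, a2, a3, m1, m2, m3} : Set (Fin (n + 3))) →
      w ∈ ({a1, a2, a3, m1, m2, m3} : Set (Fin (n + 3))) →
      (∀ d ∈ ({a1, a2, a3, m1, m2, m3} : Set (Fin (n + 3))), ¬ sbtwFin u d w) →
      ∀ x y : Fin (n + 3), x ∈ ({p, q, z} : Set (Fin (n + 3))) →
        y ∈ ({p, q, z} : Set (Fin (n + 3))) → x ≠ y →
        ¬ (sbtwFin u x w ∧ sbtwFin u y w) := by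
  intro u w _ _ hno x y hx hy hxy ⟨hxs, hys⟩
  obtain ⟨hpq, hqz, -⟩ := hdΛ
  have hsub : ({a1, a2, a3} : Set (Fin (n + 3))) ⊆ {a1, a2, a3, m1, m2, m3} := by
    intro d
    simp only [Set.mem_insert_iff, Set.mem_singleton_iff]
    tauto
  rcases le_total (x - u) (y - u) with hle | hle
  · obtain ⟨d, hd, hxdy⟩ := hIa.exists_btwFin hpq hqz hcycΛ hx hy hxy
    exact hno d (hsub hd) (sbtwFin_of_btwFin hxs hys hle hxdy)
  · obtain ⟨d, hd, hydx⟩ := hIa.exists_btwFin hpq hqz hcycΛ hy hx hxy.symm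
    exact hno d (hsub hd) (sbtwFin_of_btwFin hys hxs hle hydx)

/-- Let `Λ = △pqz` be a maximum-area polygon-aligned triangle and let the two
dividing triangles `T_a = △a1 a2 a3` and `T_m = △m1 m2 m3` each interleave `Λ`.
The six dividing vertices subdivide the cyclic vertex sequence into six
intervals; then no two distinct vertices of `Λ` lie strictly inside the same
interval, i.e. the three vertices of `Λ` lie in three pairwise disjoint
intervals, one vertex per interval. -/
theorem lambda_vertices_one_per_interval (n : ℕ) (v : Fin (n + 3) → ℝ × ℝ)
    (hP : IsConvexCCW v) (p q z a1 a2 a3 m1 m2 m3 : Fin (n + 3))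
    (hdΛ : p ≠ q ∧ q ≠ z ∧ p ≠ z) (hcycΛ : btwFin p q z)
    (hmaxΛ : ∀ x y w : Fin (n + 3),
      triArea (v x) (v y) (v w) ≤ triArea (v p) (v q) (v z))
    (hcycA : btwFin a1 a2 a3) (hcycM : btwFin m1 m2 m3)
    (hIa : InterleaveTri p q z a1 a2 a3) (hIm : InterleaveTri p q z m1 m2 m3) :
    ∀ u w : Fin (n + 3),
      u ∈ ({a1, a2, a3, m1, m2, m3} : Set (Fin (n + 3))) →
      w ∈ ({a1, a2, a3, m1, m2, m3} : Set (Fin (n + 3))) →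
      (∀ d ∈ ({a1, a2, a3, m1, m2, m3} : Set (Fin (n + 3))), ¬ sbtwFin u d w) →
      ∀ x y : Fin (n + 3), x ∈ ({p, q, z} : Set (Fin (n + 3))) →
        y ∈ ({p, q, z} : Set (Fin (n + 3))) → x ≠ y →
        ¬ (sbtwFin u x w ∧ sbtwFin u y w) :=
  lambda_vertices_one_per_interval_general n p q z a1 a2 a3 m1 m2 m3 hdΛ hcycΛ hIa
end
end

section
/- Any function T on natural numbers satisfying T(3) = O(1) and T(n) ≤ max over α ∈ [1/6, 5/6] of { T(α(n+6)) + T((1−α)(n+6)) + C(n+6), T(α(n+6)) + C(n+6) } for a constant C is bounded by O(n log n). -/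
noncomputable section

/-! The recursion replaces a problem of size `k` by subproblems of sizes at most
`(5/6)(k + 6) ≤ (11/12) k` whose sizes add up to at most `k + 6`. Under the hypothesis
`T n ≤ D n log n` for the subproblems, each loses at least `log (12/11) ≥ 1/12` in the
logarithm, so `T k ≤ D (k + 6) (log k - 1/12) + C (k + 6)`. The gain `D (k + 6) / 12`
pays for both the extra `6 D log k` and the linear cost once `D ≥ 24 C` and
`144 log k ≤ k`, which holds for all large `k` since `log = o(id)`; the finitely many
smaller `k` are absorbed into `D`. -/

open Real Filter

lemma eventually_mul_log_le (c : ℝ) : ∀ᶠ x : ℝ in atTop, c * log x ≤ x := by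
  filter_upwards [(isLittleO_log_id_atTop.const_mul_left c).bound one_pos, eventually_ge_atTop 0]
    with x hbound hx
  simpa [abs_of_nonneg hx] using (le_abs_self _).trans hbound

lemma exists_forall_lt_le_mul_mul_log (T : ℕ → ℝ) (K : ℕ) :
    ∃ M : ℝ, ∀ k < K, 2 ≤ k → T k ≤ M * k * log k := by
  obtain ⟨M, hM⟩ := ((Finset.range K).image fun k : ℕ => T k / (k * log k)).exists_le
  refine ⟨M, fun k hkK hk => ?_⟩
  have hpos : 0 < (k : ℝ) * log k :=
    mul_pos (by positivity) (log_pos (by exact_mod_cast hk))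
  calc T k = T k / (k * log k) * (k * log k) := (div_mul_cancel₀ _ hpos.ne').symm
    _ ≤ M * (k * log k) :=
      mul_le_mul_of_nonneg_right (hM _ (Finset.mem_image_of_mem _ (Finset.mem_range.2 hkK)))
        hpos.le
    _ = M * k * log k := (mul_assoc _ _ _).symm

lemma log_le_log_add_sub_one_of_le_mul {θ x y : ℝ} (hθ : 0 < θ) (hy : 0 < y) (h : y ≤ θ * x) :
    log y ≤ log x + (θ - 1) := by
  have hx : 0 < x := pos_of_mul_pos_right (hy.trans_le h) hθ.le
  calc log y ≤ log (θ * x) := log_le_log hy h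
    _ = log θ + log x := log_mul hθ.ne' hx.ne'
    _ ≤ log x + (θ - 1) := by linarith [log_le_sub_one_of_pos hθ]

section Subproblem

variable {β : ℝ} {k : ℕ}

lemma two_le_floor_mul_add_six (hβ : 1 / 6 ≤ β) (hk : 6 ≤ k) : 2 ≤ ⌊β * ((k : ℝ) + 6)⌋₊ := by
  have hk' : (6 : ℝ) ≤ k := by exact_mod_cast hk
  exact Nat.le_floor (by push_cast; nlinarith)

lemma floor_mul_add_six_le (hβ₀ : 0 ≤ β) (hβ : β ≤ 5 / 6) (hk : 60 ≤ k) :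
    (⌊β * ((k : ℝ) + 6)⌋₊ : ℝ) ≤ 11 / 12 * k := by
  have hk' : (60 : ℝ) ≤ k := by exact_mod_cast hk
  calc (⌊β * ((k : ℝ) + 6)⌋₊ : ℝ) ≤ β * (k + 6) := Nat.floor_le (by positivity)
    _ ≤ 5 / 6 * (k + 6) := by gcongr
    _ ≤ 11 / 12 * k := by linarith

variable {T : ℕ → ℝ} {D : ℝ}

lemma apply_floor_mul_add_six_le (hD : 0 ≤ D) (hβ₁ : 1 / 6 ≤ β) (hβ₂ : β ≤ 5 / 6) (hk : 60 ≤ k)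
    (ih : ∀ n < k, 2 ≤ n → T n ≤ D * n * log n) :
    T ⌊β * ((k : ℝ) + 6)⌋₊ ≤ D * (β * ((k : ℝ) + 6)) * (log k - 1 / 12) := by
  set n := ⌊β * ((k : ℝ) + 6)⌋₊
  have hn2 : 2 ≤ n := two_le_floor_mul_add_six hβ₁ (by omega)
  have hnk : (n : ℝ) ≤ 11 / 12 * k := floor_mul_add_six_le (by linarith) hβ₂ hk
  have hn0 : (0 : ℝ) < n := by positivity
  have hlog : log n ≤ log k - 1 / 12 := by
    linarith [log_le_log_add_sub_one_of_le_mul (by norm_num) hn0 hnk]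
  calc T n ≤ D * n * log n := ih n (by exact_mod_cast (by linarith : (n : ℝ) < k)) hn2
    _ ≤ D * (β * ((k : ℝ) + 6)) * (log k - 1 / 12) := by
      gcongr
      exact Nat.floor_le (by positivity)

end Subproblem

lemma le_mul_mul_log_of_le_max {C D : ℝ} {T : ℕ → ℝ} {k : ℕ} {α : ℝ} (hD : 0 ≤ D)
    (hCD : 24 * C ≤ D) (hk : 60 ≤ k) (hlog : 144 * log k ≤ k)
    (ih : ∀ n < k, 2 ≤ n → T n ≤ D * n * log n) (hα₁ : 1 / 6 ≤ α) (hα₂ : α ≤ 5 / 6)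
    (hTk : T k ≤ max
      (T ⌊α * ((k : ℝ) + 6)⌋₊ + T ⌊(1 - α) * ((k : ℝ) + 6)⌋₊ + C * ((k : ℝ) + 6))
      (T ⌊α * ((k : ℝ) + 6)⌋₊ + C * ((k : ℝ) + 6))) :
    T k ≤ D * k * log k := by
  have hk' : (60 : ℝ) ≤ k := by exact_mod_cast hk
  have hL : 0 ≤ log k - 1 / 12 := by
    have h := log_le_log_add_sub_one_of_le_mul (by norm_num) one_pos
      (by linarith : (1 : ℝ) ≤ 11 / 12 * k)
    rw [log_one] at h
    linarith
  have hfirst := apply_floor_mul_add_six_le hD hα₁ hα₂ hk ih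
  have hsecond := apply_floor_mul_add_six_le (β := 1 - α) hD (by linarith) (by linarith) hk ih
  have hsplit : T k ≤ D * ((k : ℝ) + 6) * (log k - 1 / 12) + C * ((k : ℝ) + 6) := by
    refine hTk.trans (max_le ?_ ?_)
    · linarith
    · have hsecond_nonneg : 0 ≤ D * ((1 - α) * ((k : ℝ) + 6)) * (log k - 1 / 12) := by
        have : 0 ≤ 1 - α := by linarith
        positivity
      linarith
  linarith [mul_le_mul_of_nonneg_left hlog hD,
    mul_le_mul_of_nonneg_right hCD (by positivity : (0 : ℝ) ≤ k + 6)]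

theorem recurrence_n_log_n_general (C : ℝ) (T : ℕ → ℝ)
    (hrec : ∀ k : ℕ, 3 < k → ∃ α : ℝ, 1 / 6 ≤ α ∧ α ≤ 5 / 6 ∧
      T k ≤ max
        (T ⌊α * ((k : ℝ) + 6)⌋₊ + T ⌊(1 - α) * ((k : ℝ) + 6)⌋₊ + C * ((k : ℝ) + 6))
        (T ⌊α * ((k : ℝ) + 6)⌋₊ + C * ((k : ℝ) + 6))) :
    ∃ D : ℝ, ∀ k : ℕ, 2 ≤ k → T k ≤ D * (k : ℝ) * Real.log (k : ℝ) := by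
  obtain ⟨K, hK⟩ := eventually_atTop.mp <| (eventually_ge_atTop 60).and <|
    tendsto_natCast_atTop_atTop.eventually (eventually_mul_log_le 144)
  obtain ⟨M, hM⟩ := exists_forall_lt_le_mul_mul_log T K
  refine ⟨max (max M (24 * C)) 0, fun k => ?_⟩
  induction k using Nat.strong_induction_on with
  | _ k ih =>
  intro hk
  by_cases hkK : k < K
  · have hklog : 0 ≤ (k : ℝ) * log k := by positivity
    calc T k ≤ M * k * log k := hM k hkK hk
      _ ≤ max (max M (24 * C)) 0 * k * log k := by
        rw [mul_assoc, mul_assoc]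
        exact mul_le_mul_of_nonneg_right (le_max_of_le_left (le_max_left _ _)) hklog
  · obtain ⟨hk60, hlog⟩ := hK k (by omega)
    obtain ⟨α, hα₁, hα₂, hTk⟩ := hrec k (by omega)
    exact le_mul_mul_log_of_le_max (le_max_right _ _) (le_max_of_le_left (le_max_right _ _))
      hk60 hlog ih hα₁ hα₂ hTk

/-- The divide-and-conquer recurrence: any function `T` with `T k = O(1)` for
`k ≤ 3` and `T k ≤ max { T(α(k+6)) + T((1-α)(k+6)) + C(k+6), T(α(k+6)) + C(k+6) }`
for some `α ∈ [1/6, 5/6]` (for every `k > 3`) is bounded by `O(k log k)`. -/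
theorem recurrence_n_log_n (C : ℝ) (hC : 0 < C) (T : ℕ → ℝ)
    (hbase : ∀ k : ℕ, k ≤ 3 → T k ≤ C)
    (hrec : ∀ k : ℕ, 3 < k → ∃ α : ℝ, 1 / 6 ≤ α ∧ α ≤ 5 / 6 ∧
      T k ≤ max
        (T ⌊α * ((k : ℝ) + 6)⌋₊ + T ⌊(1 - α) * ((k : ℝ) + 6)⌋₊ + C * ((k : ℝ) + 6))
        (T ⌊α * ((k : ℝ) + 6)⌋₊ + C * ((k : ℝ) + 6))) :
    ∃ D : ℝ, ∀ k : ℕ, 2 ≤ k → T k ≤ D * (k : ℝ) * Real.log (k : ℝ) :=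
  recurrence_n_log_n_general C T hrec
end
end

section
/- For the 16-vertex convex polygon P with vertices a1=(26096,6750), a2=(26130,9933), a3=(25940,10728), a4=(23090,22189), a5=(18106,23681), a6=(13484,24407), a7=(13174,24343), a8=(3090,22189), a9=(0,17308), a10=(80,14350), a11=(323,13331), a12=(3090,2189), a13=(8459,385), a14=(12837,0), a15=(13392,114), a16=(23090,2189), the quadrilateral a4 a8 a12 a16 has strictly larger area than the quadrilateral a1 a4 a8 a12. -/
noncomputable section

/-- Area of a convex quadrilateral `p q r s` (vertices in cyclic order),
computed as the sum of the areas of triangles `p q r` and `p r s`. -/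
def quadArea (p q r s : ℝ × ℝ) : ℝ := triArea p q r + triArea p r s

/-- The sixteen vertices a1, ..., a16 of the quadrilateral counter-example
polygon, in counterclockwise convex-position order. -/
def V16 : Fin 16 → ℝ × ℝ :=
  ![((26096 : ℝ), (6750 : ℝ)), ((26130 : ℝ), (9933 : ℝ)), ((25940 : ℝ), (10728 : ℝ)),
    ((23090 : ℝ), (22189 : ℝ)), ((18106 : ℝ), (23681 : ℝ)), ((13484 : ℝ), (24407 : ℝ)),
    ((13174 : ℝ), (24343 : ℝ)), ((3090 : ℝ), (22189 : ℝ)), ((0 : ℝ), (17308 : ℝ)),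
    ((80 : ℝ), (14350 : ℝ)), ((323 : ℝ), (13331 : ℝ)), ((3090 : ℝ), (2189 : ℝ)),
    ((8459 : ℝ), (385 : ℝ)), ((12837 : ℝ), (0 : ℝ)), ((13392 : ℝ), (114 : ℝ)),
    ((23090 : ℝ), (2189 : ℝ))]

/-- In the 16-vertex counter-example polygon (vertices `a1, ..., a16` given by
`V16 0, ..., V16 15`), the quadrilateral `a4 a8 a12 a16` has strictly larger
area than the quadrilateral `a1 a4 a8 a12` reported by the Dobkin–Snyder
quadrilateral algorithm. -/
theorem quad_counterexample :
    quadArea (V16 0) (V16 3) (V16 7) (V16 11) <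
      quadArea (V16 3) (V16 7) (V16 11) (V16 15) := by
  have h0 : V16 0 = (26096, 6750) := rfl
  have h3 : V16 3 = (23090, 22189) := rfl
  have h7 : V16 7 = (3090, 22189) := rfl
  have h11 : V16 11 = (3090, 2189) := rfl
  have h15 : V16 15 = (23090, 2189) := rfl
  rw [h0, h3, h7, h11, h15]
  simp only [quadArea, triArea, det2]
  norm_num
end
end

section
/- In the 16-vertex polygon P with the coordinates given (a1 through a16 as in the counter-example), the quadrilateral a4 a8 a12 a16 is a maximum-area quadrilateral with vertices among the vertices of P. -/
noncomputable section

/-- Integer coordinates of the sixteen vertices. -/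
def cZ : Fin 16 → ℤ × ℤ :=
  ![(26096, 6750), (26130, 9933), (25940, 10728),
    (23090, 22189), (18106, 23681), (13484, 24407),
    (13174, 24343), (3090, 22189), (0, 17308),
    (80, 14350), (323, 13331), (3090, 2189),
    (8459, 385), (12837, 0), (13392, 114),
    (23090, 2189)]

/-- Integer version of twice the signed triangle area. -/
def dZ (i j k : Fin 16) : ℤ :=
  ((cZ j).1 - (cZ i).1) * ((cZ k).2 - (cZ i).2) -
    ((cZ j).2 - (cZ i).2) * ((cZ k).1 - (cZ i).1)

set_option maxRecDepth 10000 in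
theorem keyZ : ∀ i j k l : Fin 16, i < j → j < k → k < l →
    |dZ i j k| + |dZ i k l| ≤ |dZ 3 7 11| + |dZ 3 11 15| := by decide

lemma V16_cast (i : Fin 16) : V16 i = (((cZ i).1 : ℝ), ((cZ i).2 : ℝ)) := by
  fin_cases i <;> norm_num [V16, cZ]

lemma det2_cast (i j k : Fin 16) :
    det2 (V16 i) (V16 j) (V16 k) = (dZ i j k : ℝ) := by
  rw [V16_cast i, V16_cast j, V16_cast k]
  simp only [det2, dZ]
  push_cast
  ring

lemma quadArea_cast (i j k l : Fin 16) :
    quadArea (V16 i) (V16 j) (V16 k) (V16 l) =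
      ((|dZ i j k| + |dZ i k l| : ℤ) : ℝ) / 2 := by
  simp only [quadArea, triArea, det2_cast]
  push_cast
  ring

/-- In the 16-vertex counter-example polygon, the quadrilateral `a4 a8 a12 a16`
(`V16 3, V16 7, V16 11, V16 15`) is a maximum-area quadrilateral with vertices
among the vertices of the polygon (over all 4-element vertex subsets, taken in
cyclic order). -/
theorem quad_counterexample_max :
    ∀ i j k l : Fin 16, i < j → j < k → k < l →
      quadArea (V16 i) (V16 j) (V16 k) (V16 l) ≤
        quadArea (V16 3) (V16 7) (V16 11) (V16 15) := by
  intro i j k l hij hjk hkl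
  rw [quadArea_cast, quadArea_cast]
  have h := keyZ i j k l hij hjk hkl
  have hc : ((|dZ i j k| + |dZ i k l| : ℤ) : ℝ) ≤
      ((|dZ 3 7 11| + |dZ 3 11 15| : ℤ) : ℝ) := by exact_mod_cast h
  linarith
end
end
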